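/- arXiv:1504.01143 — 2 statements merged into one kernel-verified Lean document; each statement's English description precedes it below -/
import Mathlib

section
/- Let G1 and G2 be disjoint simple graphs and let G be obtained from their disjoint union by adding a single edge joining a vertex of G1 to a vertex of G2. Then G is a circle graph if and only if both G1 and G2 are circle graphs. -/
open SimpleGraph

/-- Two letters are interlaced in a word if their occurrences alternate. -/
def Interlaced {α : Type} [DecidableEq α] (W : List α) (a b : α) : Prop :=
  W.filter (fun x => x == a || x == b) = [a, b, a, b] ∨
  W.filter (fun x => x == a || x == b) = [b, a, b, a]

/-- The interlacement graph of a word. -/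
def interlacementGraph {α : Type} [DecidableEq α] (W : List α) : SimpleGraph α where
  Adj a b := a ≠ b ∧ (Interlaced W a b ∨ Interlaced W b a)
  symm := ⟨fun a b h => ⟨h.1.symm, h.2.symm⟩⟩
  loopless := ⟨fun a h => h.1 rfl⟩

/-- A double occurrence word: each letter of the alphabet occurs exactly twice. -/
def IsDOW {α : Type} [DecidableEq α] (W : List α) : Prop := ∀ a : α, W.count a = 2

/-- A circle graph: a graph isomorphic to the interlacement graph of a
double occurrence word. -/
def IsCircleGraph {V : Type} (G : SimpleGraph V) : Prop :=
  ∃ (n : ℕ) (W : List (Fin n)), IsDOW W ∧ Nonempty (G ≃g interlacementGraph W)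

/-- Local complementation at a vertex `v`: toggle adjacency inside `N(v)`. -/
def localComplement {V : Type} (G : SimpleGraph V) (v : V) : SimpleGraph V where
  Adj x y := x ≠ y ∧ ((G.Adj v x ∧ G.Adj v y ∧ ¬ G.Adj x y) ∨
    (¬ (G.Adj v x ∧ G.Adj v y) ∧ G.Adj x y))
  symm := by
    constructor
    rintro x y ⟨hxy, h | h⟩
    · exact ⟨hxy.symm, Or.inl ⟨h.2.1, h.1, fun hc => h.2.2 hc.symm⟩⟩
    · exact ⟨hxy.symm, Or.inr ⟨fun hc => h.1 ⟨hc.2, hc.1⟩, h.2.symm⟩⟩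
  loopless := ⟨fun x h => h.1 rfl⟩

/-- A split `(V1, X1; V2, X2)` of a graph. -/
def IsSplit {V : Type} (G : SimpleGraph V) (V1 X1 V2 X2 : Set V) : Prop :=
  V1 ∪ V2 = Set.univ ∧ Disjoint V1 V2 ∧ 2 ≤ V1.encard ∧ 2 ≤ V2.encard ∧
  X1 ⊆ V1 ∧ X2 ⊆ V2 ∧ ∀ x ∈ V1, ∀ y ∈ V2, (G.Adj x y ↔ x ∈ X1 ∧ y ∈ X2)

/-- A graph has a split. -/
def HasSplit {V : Type} (G : SimpleGraph V) : Prop :=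
  ∃ V1 X1 V2 X2, IsSplit G V1 X1 V2 X2

/-- Twin vertices: same neighbours outside `{u, v}`. -/
def IsTwinPair {V : Type} (G : SimpleGraph V) (u v : V) : Prop :=
  u ≠ v ∧ G.neighborSet u \ {v} = G.neighborSet v \ {u}

/-- Adjacent twins. -/
def AdjacentTwins {V : Type} (G : SimpleGraph V) (u v : V) : Prop :=
  G.Adj u v ∧ G.neighborSet u \ {v} = G.neighborSet v \ {u}

/-- Nonadjacent twins. -/
def NonadjacentTwins {V : Type} (G : SimpleGraph V) (u v : V) : Prop :=
  u ≠ v ∧ ¬ G.Adj u v ∧ G.neighborSet u = G.neighborSet v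

/-- Delete a vertex: keep the vertex set, remove all edges at `v`. -/
def deleteVertex {V : Type} (G : SimpleGraph V) (v : V) : SimpleGraph V where
  Adj x y := G.Adj x y ∧ x ≠ v ∧ y ≠ v
  symm := ⟨fun x y h => ⟨h.1.symm, h.2.2, h.2.1⟩⟩
  loopless := ⟨fun x h => G.irrefl h.1⟩

/-- `v` is a cutpoint of the connected graph `G`. -/
def IsCutpoint {V : Type} (G : SimpleGraph V) (v : V) : Prop :=
  G.Connected ∧ ∃ x y : V, x ≠ v ∧ y ≠ v ∧ ¬ (deleteVertex G v).Reachable x y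

/-- Cyclic equivalence of words: generated by rotations and reversals. -/
inductive CyclicEquiv {β : Type} : List β → List β → Prop
  | refl (l : List β) : CyclicEquiv l l
  | rot (l₁ l₂ : List β) : CyclicEquiv (l₁ ++ l₂) (l₂ ++ l₁)
  | rev (l : List β) : CyclicEquiv l l.reverse
  | symm {l₁ l₂ : List β} : CyclicEquiv l₁ l₂ → CyclicEquiv l₂ l₁
  | trans {l₁ l₂ l₃ : List β} : CyclicEquiv l₁ l₂ → CyclicEquiv l₂ l₃ → CyclicEquiv l₁ l₃

/-- `G` is 3-connected: more than 3 vertices, and removing fewer than 3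
vertices leaves it connected. -/
def ThreeConnected {V : Type} [Fintype V] (G : SimpleGraph V) : Prop :=
  3 < Fintype.card V ∧ ∀ K : Set V, K.ncard < 3 → (G.induce (Kᶜ : Set V)).Connected

/-- The disjoint union of two graphs, joined by a single edge from `a` to `b`. -/
def joinedByEdge {V₁ V₂ : Type} (G₁ : SimpleGraph V₁) (G₂ : SimpleGraph V₂)
    (a : V₁) (b : V₂) : SimpleGraph (V₁ ⊕ V₂) where
  Adj x y :=
    Sum.elim (fun u => Sum.elim (fun w => G₁.Adj u w) (fun w => u = a ∧ w = b) y)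
             (fun u => Sum.elim (fun w => u = b ∧ w = a) (fun w => G₂.Adj u w) y) x
  symm := by
    constructor
    rintro (u | u) (w | w) h
    · exact h.symm
    · exact ⟨h.2, h.1⟩
    · exact ⟨h.2, h.1⟩
    · exact h.symm
  loopless := by
    constructor
    rintro (u | u) h
    · exact G₁.irrefl h
    · exact G₂.irrefl h

/-!
Restricting a double occurrence word to a set of letters realises the induced subgraph on those
letters, which gives one direction. Conversely, interlacement is invariant under rotation, so the
words for `G₁` and `G₂` may be taken of the form `A x` and `y B`, where the letters `x`, `y` stand
for the ends of the new edge. In the word `A y x B` the letters of each side keep their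
interlacements, and `x`, `y` interlace; any other pair `c`, `d` from different sides is not
interlaced, because the word splits into a prefix avoiding `d` and a suffix avoiding `c`.
-/

open List Function

section Words

variable {α β : Type}

theorem append_comm_eq_alternating {u v : List α} {a b : α} (h : u ++ v = [a, b, a, b]) :
    v ++ u = [a, b, a, b] ∨ v ++ u = [b, a, b, a] := by
  rcases u with _ | ⟨_, _ | ⟨_, _ | ⟨_, _ | ⟨_, _⟩⟩⟩⟩ <;> simp_all

theorem exists_isRotated_cons {W : List α} {x : α} (h : x ∈ W) : ∃ B, W ~r x :: B := by
  obtain ⟨s, t, rfl⟩ := append_of_mem h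
  exact ⟨t ++ s, by simpa using isRotated_append (l := s) (l' := x :: t)⟩

theorem exists_isRotated_append_singleton {W : List α} {x : α} (h : x ∈ W) :
    ∃ A, W ~r A ++ [x] := by
  obtain ⟨A, hA⟩ := exists_isRotated_cons h
  exact ⟨A, hA.trans IsRotated.cons_append_singleton⟩

theorem map_filterMap_partialInv {f : β → α} (hf : Injective f) (W : List α) :
    (W.filterMap (partialInv f)).map f = W.filter (fun s => (partialInv f s).isSome) := by
  induction W with
  | nil => rfl
  | cons s W ih =>
    cases h : partialInv f s with
    | none => simp [h, ih]
    | some v => simp [h, ih, (hf.isPartialInv v s).1 h]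

variable [DecidableEq α] [DecidableEq β]

theorem exists_eq_append_cons_of_count_eq_one {a : α} {l : List α} (h : l.count a = 1) :
    ∃ s t, l = s ++ a :: t ∧ a ∉ s ∧ a ∉ t := by
  obtain ⟨s, t, rfl⟩ := append_of_mem (count_pos_iff.1 (h ▸ Nat.one_pos : 0 < l.count a))
  simp only [count_append, count_cons_self] at h
  exact ⟨s, t, rfl, count_eq_zero.1 (by omega), count_eq_zero.1 (by omega)⟩

theorem IsDOW.mem {W : List α} (hW : IsDOW W) (x : α) : x ∈ W :=
  count_pos_iff.1 (by rw [hW x]; norm_num)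

theorem IsDOW.isRotated {W W' : List α} (hW : IsDOW W) (h : W ~r W') : IsDOW W' :=
  fun a => h.perm.count_eq a ▸ hW a

theorem interlaced_comm {W : List α} {a b : α} : Interlaced W a b ↔ Interlaced W b a := by
  unfold Interlaced
  simp only [Bool.or_comm (_ == a)]
  tauto

theorem interlacementGraph_adj {W : List α} {a b : α} :
    (interlacementGraph W).Adj a b ↔ a ≠ b ∧ Interlaced W a b := by
  simp only [interlacementGraph, interlaced_comm (a := b), or_self]

theorem interlaced_map_iff {f : α → β} (hf : Injective f) {W : List α} {a b : α} :
    Interlaced (W.map f) (f a) (f b) ↔ Interlaced W a b := by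
  have hfilter : (W.map f).filter (fun s => s == f a || s == f b)
      = (W.filter (fun s => s == a || s == b)).map f := by
    simp only [filter_map, comp_def, hf.beq_eq]
  unfold Interlaced
  rw [hfilter]
  constructor <;> rintro (h | h)
  · exact .inl (map_injective_iff.2 hf (by simpa using h))
  · exact .inr (map_injective_iff.2 hf (by simpa using h))
  · exact .inl (by simp [h])
  · exact .inr (by simp [h])

theorem interlaced_filter_iff {P : α → Bool} {W : List α} {a b : α} (ha : P a) (hb : P b) :
    Interlaced (W.filter P) a b ↔ Interlaced W a b := by
  have hfilter : (W.filter P).filter (fun s => s == a || s == b)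
      = W.filter (fun s => s == a || s == b) := by
    rw [filter_filter]
    refine filter_congr fun s _ => ?_
    by_cases hsa : s = a <;> by_cases hsb : s = b <;> simp [hsa, hsb, ha, hb]
  unfold Interlaced
  rw [hfilter]

theorem Interlaced.append_comm {L₁ L₂ : List α} {a b : α} :
    Interlaced (L₁ ++ L₂) a b → Interlaced (L₂ ++ L₁) a b := by
  unfold Interlaced
  simp only [filter_append]
  rintro (h | h)
  · exact append_comm_eq_alternating h
  · exact (append_comm_eq_alternating h).symm

theorem interlacementGraph_eq_of_isRotated {W W' : List α} (h : W ~r W') :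
    interlacementGraph W = interlacementGraph W' := by
  obtain ⟨n, rfl⟩ := h
  ext a b
  simp only [interlacementGraph_adj, rotate_eq_drop_append_take_mod]
  conv_lhs => rw [← take_append_drop (n % W.length) W]
  exact and_congr_right fun _ => ⟨Interlaced.append_comm, Interlaced.append_comm⟩

theorem filter_pair_eq_nil {L : List α} {a b : α} (ha : a ∉ L) (hb : b ∉ L) :
    L.filter (fun s => s == a || s == b) = [] :=
  filter_eq_nil_iff.2 fun s hs => by
    simp only [Bool.or_eq_true, beq_iff_eq]
    rintro (rfl | rfl) <;> contradiction

theorem not_interlaced_append {L₁ L₂ : List α} {a b : α} (ha : a ∉ L₂) (hb : b ∉ L₁) :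
    ¬ Interlaced (L₁ ++ L₂) a b := by
  have key : ∀ l, (l = [a, b, a, b] ∨ l = [b, a, b, a]) → ¬ l <+ L₁ ++ L₂ := by
    rintro l hl hsub
    obtain ⟨r₁, r₂, rfl, h₁, h₂⟩ := sublist_append_iff.1 hsub
    have hb₁ : b ∉ r₁ := fun h => hb (h₁.subset h)
    have ha₂ : a ∉ r₂ := fun h => ha (h₂.subset h)
    rcases hl with hl | hl <;>
      rcases r₁ with _ | ⟨_, _ | ⟨_, _ | ⟨_, _ | ⟨_, _⟩⟩⟩⟩ <;> simp_all
  rintro (h | h)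
  · exact key _ (.inl h) (h ▸ filter_sublist)
  · exact key _ (.inr h) (h ▸ filter_sublist)

theorem comap_interlacementGraph {f : β → α} (hf : Injective f) (W : List α) :
    (interlacementGraph W).comap f = interlacementGraph (W.filterMap (partialInv f)) := by
  ext u v
  rw [comap_adj, interlacementGraph_adj, interlacementGraph_adj, hf.ne_iff,
    ← interlaced_map_iff hf, map_filterMap_partialInv hf,
    interlaced_filter_iff (by simp [partialInv_left hf]) (by simp [partialInv_left hf])]

theorem IsDOW.filterMap_partialInv {W : List α} (hW : IsDOW W) {f : β → α} (hf : Injective f) :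
    IsDOW (W.filterMap (partialInv f)) := fun v => by
  rw [← count_map_of_injective _ f hf, map_filterMap_partialInv hf,
    count_filter (by simp [partialInv_left hf]), hW]

theorem isCircleGraph_of_iso {V σ : Type} [Finite σ] [DecidableEq σ] {G : SimpleGraph V}
    {W : List σ} (hW : IsDOW W) (e : G ≃g interlacementGraph W) : IsCircleGraph G := by
  have := Fintype.ofFinite σ
  let r := Fintype.equivFin σ
  have hr : (interlacementGraph (W.map r)).comap r = interlacementGraph W := by
    rw [comap_interlacementGraph r.injective, filterMap_map]
    simp [partialInv_left r.injective]
  refine ⟨_, W.map r, fun c => ?_, ⟨e.trans (hr ▸ Iso.comap r _)⟩⟩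
  rw [← r.apply_symm_apply c, count_map_of_injective _ r r.injective, hW]

theorem IsCircleGraph.of_embedding {V V' : Type} {G : SimpleGraph V} {H : SimpleGraph V'}
    (hG : IsCircleGraph G) (f : H ↪g G) : IsCircleGraph H := by
  classical
  obtain ⟨n, W, hW, ⟨e⟩⟩ := hG
  let g : H ↪g interlacementGraph W := f.trans e.toEmbedding
  have := Finite.of_injective g g.injective
  have hH : interlacementGraph (W.filterMap (partialInv g)) = H := by
    rw [← comap_interlacementGraph g.injective, g.comap_eq]
  refine isCircleGraph_of_iso (hW.filterMap_partialInv g.injective) ?_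
  rw [hH]

end Words

section JoinedByEdge

variable {V₁ V₂ W₁ W₂ : Type} {G₁ : SimpleGraph V₁} {G₂ : SimpleGraph V₂} {a : V₁} {b : V₂}

@[simp] theorem joinedByEdge_adj_inl_inl {u v : V₁} :
    (joinedByEdge G₁ G₂ a b).Adj (.inl u) (.inl v) ↔ G₁.Adj u v := Iff.rfl

@[simp] theorem joinedByEdge_adj_inr_inr {u v : V₂} :
    (joinedByEdge G₁ G₂ a b).Adj (.inr u) (.inr v) ↔ G₂.Adj u v := Iff.rfl

@[simp] theorem joinedByEdge_adj_inl_inr {u : V₁} {v : V₂} :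
    (joinedByEdge G₁ G₂ a b).Adj (.inl u) (.inr v) ↔ u = a ∧ v = b := Iff.rfl

@[simp] theorem joinedByEdge_adj_inr_inl {u : V₂} {v : V₁} :
    (joinedByEdge G₁ G₂ a b).Adj (.inr u) (.inl v) ↔ u = b ∧ v = a := Iff.rfl

def joinedByEdgeCongr {H₁ : SimpleGraph W₁} {H₂ : SimpleGraph W₂} (e₁ : G₁ ≃g H₁)
    (e₂ : G₂ ≃g H₂) : joinedByEdge G₁ G₂ a b ≃g joinedByEdge H₁ H₂ (e₁ a) (e₂ b) where
  toEquiv := Equiv.sumCongr e₁.toEquiv e₂.toEquiv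
  map_rel_iff' := by rintro (u | u) (v | v) <;> simp [e₁.map_adj_iff, e₂.map_adj_iff]

end JoinedByEdge

section Bridge

variable {α β : Type}

/-- The words `A x` and `y B` placed side by side, with their two middle letters swapped. -/
def bridgeWord (A : List α) (x : α) (y : β) (B : List β) : List (α ⊕ β) :=
  A.map .inl ++ .inr y :: .inl x :: B.map .inr

theorem bridgeWord_perm (A : List α) (x : α) (y : β) (B : List β) :
    bridgeWord A x y B ~ (A ++ [x]).map Sum.inl ++ (y :: B).map Sum.inr := by
  simpa [bridgeWord] using
    (Perm.swap (Sum.inl x) (Sum.inr y) (B.map Sum.inr)).append_left (A.map Sum.inl)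

theorem filter_isLeft_bridgeWord (A : List α) (x : α) (y : β) (B : List β) :
    (bridgeWord A x y B).filter Sum.isLeft = (A ++ [x]).map .inl := by
  simp [bridgeWord, filter_map, filter_cons, comp_def]

theorem filter_isRight_bridgeWord (A : List α) (x : α) (y : β) (B : List β) :
    (bridgeWord A x y B).filter Sum.isRight = (y :: B).map .inr := by
  simp [bridgeWord, filter_map, filter_cons, comp_def]

variable [DecidableEq α] [DecidableEq β]

-- `IsDOW` counts letters with the `BEq` instance coming from `DecidableEq`; without this, the
-- lemmas below would elaborate `count` on `α ⊕ β` with the structural `BEq` of sums instead.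
attribute [local instance 2000] instBEqOfDecidableEq

theorem IsDOW.bridgeWord {A : List α} {x : α} {y : β} {B : List β} (hA : IsDOW (A ++ [x]))
    (hB : IsDOW (y :: B)) : IsDOW (bridgeWord A x y B) := by
  rintro (c | d) <;> rw [(bridgeWord_perm A x y B).count_eq, count_append]
  · rw [count_map_of_injective _ _ Sum.inl_injective, hA,
      (count_eq_zero (l := (y :: B).map Sum.inr)).2 (by simp)]
  · rw [count_map_of_injective _ _ Sum.inr_injective, hB,
      (count_eq_zero (l := (A ++ [x]).map Sum.inl)).2 (by simp)]

theorem interlaced_bridgeWord_inl_inr {A : List α} {x : α} {y : β} {B : List β}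
    (hx : A.count x = 1) (hy : B.count y = 1) {c : α} {d : β} :
    Interlaced (bridgeWord A x y B) (.inl c) (.inr d) ↔ c = x ∧ d = y := by
  constructor
  · intro h
    by_contra hcd
    rcases not_and_or.1 hcd with hc | hd
    · exact not_interlaced_append (L₁ := A.map Sum.inl) (by simp [hc]) (by simp) h
    · have h' : Interlaced ((A.map Sum.inl ++ [.inr y, .inl x]) ++ B.map Sum.inr)
          (.inl c) (.inr d) := by simpa [bridgeWord] using h
      exact not_interlaced_append (by simp) (by simp [hd]) h'
  · rintro ⟨rfl, rfl⟩
    obtain ⟨A₁, A₂, rfl, hA₁, hA₂⟩ := exists_eq_append_cons_of_count_eq_one hx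
    obtain ⟨B₁, B₂, rfl, hB₁, hB₂⟩ := exists_eq_append_cons_of_count_eq_one hy
    left
    simp [bridgeWord, filter_append, filter_pair_eq_nil, hA₁, hA₂, hB₁, hB₂]

theorem interlacementGraph_bridgeWord {A : List α} {x : α} {y : β} {B : List β}
    (hx : A.count x = 1) (hy : B.count y = 1) :
    interlacementGraph (bridgeWord A x y B)
      = joinedByEdge (interlacementGraph (A ++ [x])) (interlacementGraph (y :: B)) x y := by
  have mixed (u : α) (v : β) : (interlacementGraph (bridgeWord A x y B)).Adj (.inl u) (.inr v) ↔
      (joinedByEdge (interlacementGraph (A ++ [x])) (interlacementGraph (y :: B)) x y).Adj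
        (.inl u) (.inr v) := by
    rw [joinedByEdge_adj_inl_inr, interlacementGraph_adj, interlaced_bridgeWord_inl_inr hx hy,
      and_iff_right Sum.inl_ne_inr]
  ext (u | u) (v | v)
  · rw [joinedByEdge_adj_inl_inl, interlacementGraph_adj, interlacementGraph_adj,
      ← interlaced_filter_iff (P := Sum.isLeft) rfl rfl, filter_isLeft_bridgeWord,
      interlaced_map_iff Sum.inl_injective, Sum.inl_injective.ne_iff]
  · exact mixed u v
  · rw [adj_comm, (joinedByEdge _ _ _ _).adj_comm]
    exact mixed v u
  · rw [joinedByEdge_adj_inr_inr, interlacementGraph_adj, interlacementGraph_adj,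
      ← interlaced_filter_iff (P := Sum.isRight) rfl rfl, filter_isRight_bridgeWord,
      interlaced_map_iff Sum.inr_injective, Sum.inr_injective.ne_iff]

theorem exists_interlacementGraph_eq_joinedByEdge {W₁ : List α} {W₂ : List β} (hW₁ : IsDOW W₁)
    (hW₂ : IsDOW W₂) (x : α) (y : β) :
    ∃ W : List (α ⊕ β), IsDOW W ∧
      interlacementGraph W = joinedByEdge (interlacementGraph W₁) (interlacementGraph W₂) x y := by
  obtain ⟨A, hA⟩ := exists_isRotated_append_singleton (hW₁.mem x)
  obtain ⟨B, hB⟩ := exists_isRotated_cons (hW₂.mem y)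
  have hA' := hW₁.isRotated hA
  have hB' := hW₂.isRotated hB
  have hx : A.count x = 1 := by simpa using hA' x
  have hy : B.count y = 1 := by simpa using hB' y
  refine ⟨bridgeWord A x y B, hA'.bridgeWord hB', ?_⟩
  rw [interlacementGraph_bridgeWord hx hy, interlacementGraph_eq_of_isRotated hA,
    interlacementGraph_eq_of_isRotated hB]

end Bridge

/-- Attaching two disjoint graphs with a single edge gives a circle graph
iff both pieces are circle graphs. -/
theorem stmt4 {V₁ V₂ : Type} (G₁ : SimpleGraph V₁) (G₂ : SimpleGraph V₂) (a : V₁) (b : V₂) :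
    IsCircleGraph (joinedByEdge G₁ G₂ a b) ↔ IsCircleGraph G₁ ∧ IsCircleGraph G₂ := by
  constructor
  · intro h
    exact ⟨h.of_embedding ⟨Embedding.inl, Iff.rfl⟩, h.of_embedding ⟨Embedding.inr, Iff.rfl⟩⟩
  · rintro ⟨⟨n₁, W₁, hW₁, ⟨e₁⟩⟩, ⟨n₂, W₂, hW₂, ⟨e₂⟩⟩⟩
    obtain ⟨W, hW, hWeq⟩ := exists_interlacementGraph_eq_joinedByEdge hW₁ hW₂ (e₁ a) (e₂ b)
    exact isCircleGraph_of_iso hW (hWeq ▸ joinedByEdgeCongr (a := a) (b := b) e₁ e₂)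
end

section
/- A simple graph G has a split (V1, X1; V2, X2) if and only if for any vertex v, the local complement G^v has a split of the form (V1, Y1; V2, Y2) with the same vertex partition. -/
open SimpleGraph

/-!
Let `v ∈ V₁`. An edge `xy` with `x ∈ V₁`, `y ∈ V₂` is toggled by local complementation at `v`
exactly when `x` and `y` are both neighbours of `v`, and `y ∼ v` means `v ∈ X₁ ∧ y ∈ X₂`.
So the edges across the partition in `G^v` are still complete bipartite, between `X₂` and
the set `X₁` toggled on the neighbours of `v` in `V₁` when `v ∈ X₁`. The converse follows
because local complementation at `v` is an involution.
-/

theorem localComplement_localComplement {V : Type} (G : SimpleGraph V) (v : V) :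
    localComplement (localComplement G v) v = G := by
  ext x y
  have hvx : G.Adj v x → v ≠ x := Adj.ne
  have hvy : G.Adj v y → v ≠ y := Adj.ne
  have hxy : G.Adj x y → x ≠ y := Adj.ne
  have hvv : ¬ G.Adj v v := G.irrefl
  simp only [localComplement]
  tauto

namespace IsSplit

variable {V : Type} {G : SimpleGraph V} {V₁ X₁ V₂ X₂ : Set V}

theorem symm (h : IsSplit G V₁ X₁ V₂ X₂) : IsSplit G V₂ X₂ V₁ X₁ := by
  obtain ⟨hcover, hdisj, hcard₁, hcard₂, hX₁, hX₂, hadj⟩ := h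
  refine ⟨Set.union_comm V₁ V₂ ▸ hcover, hdisj.symm, hcard₂, hcard₁, hX₂, hX₁, ?_⟩
  intro x hx y hy
  rw [adj_comm, hadj y hy x hx, and_comm]

theorem localComplement_of_mem_left {v : V} (hv : v ∈ V₁) (h : IsSplit G V₁ X₁ V₂ X₂) :
    IsSplit (localComplement G v) V₁ {x ∈ V₁ | Xor (x ∈ X₁) (v ∈ X₁ ∧ G.Adj v x)} V₂ X₂ := by
  obtain ⟨hcover, hdisj, hcard₁, hcard₂, -, hX₂, hadj⟩ := h
  refine ⟨hcover, hdisj, hcard₁, hcard₂, Set.sep_subset _ _, hX₂, ?_⟩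
  intro x hx y hy
  have hxy : x ≠ y := fun hxy => Set.disjoint_left.mp hdisj hx (hxy ▸ hy)
  simp only [localComplement, Set.mem_ofPred_eq, Xor, hadj x hx y hy, hadj v hv y hy]
  tauto

theorem exists_localComplement (h : IsSplit G V₁ X₁ V₂ X₂) (v : V) :
    ∃ Y₁ Y₂ : Set V, IsSplit (localComplement G v) V₁ Y₁ V₂ Y₂ := by
  rcases (Set.eq_univ_iff_forall.mp h.1 v : v ∈ V₁ ∪ V₂) with hv | hv
  · exact ⟨_, _, h.localComplement_of_mem_left hv⟩
  · exact ⟨_, _, (h.symm.localComplement_of_mem_left hv).symm⟩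

end IsSplit

/-- `G` has a split `(V1, X1; V2, X2)` iff the local complement `G^v` has a
split with the same vertex partition. -/
theorem stmt8 {V : Type} (G : SimpleGraph V) (V₁ V₂ : Set V) (v : V) :
    (∃ X₁ X₂ : Set V, IsSplit G V₁ X₁ V₂ X₂) ↔
      ∃ Y₁ Y₂ : Set V, IsSplit (localComplement G v) V₁ Y₁ V₂ Y₂ := by
  constructor
  · rintro ⟨X₁, X₂, h⟩
    exact h.exists_localComplement v
  · rintro ⟨Y₁, Y₂, h⟩
    simpa only [localComplement_localComplement] using h.exists_localComplement v
end
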